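/- Let $h:\Sigma^* \to \Gamma^*$ be a synchronizing $q$-uniform morphism, let $n > 1$ be an integer, and let $w \in \Sigma^*$. If $z^n$ is a prefix of $h(w)$ for some word $z$ with $|z| \geq q$, then $|z| \equiv 0 \pmod q$ and there exists a word $u$ with $u^n$ a prefix of $w$. -/

import Mathlib

/- A synchronizing morphism is injective on letters, and its letter images can only occur in an
image word at positions divisible by `q`: an occurrence straddling two consecutive letter images
`h a ++ h b` at an offset strictly between `0` and `q` contradicts synchronization.

Let `zz` be a prefix of `h w` with `|z| ≥ q`. The first letter image of `h w` is a prefix of `z`,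
so it also occurs at position `|z|`; hence `q ∣ |z|`. A prefix of `h w` of length divisible by `q`
is the image of a word `u`, so `zⁿ = h (uⁿ)` is a prefix of `h w`, and since `h` is a uniform
injective morphism this pulls back to `uⁿ` being a prefix of `w`. -/

/-- The extension of a morphism `h` (given on letters) to finite words. -/
def applyMorphism {α β : Type*} (h : α → List β) (l : List α) : List β :=
  (l.map h).flatten

def Synchronizing {α β : Type*} (h : α → List β) : Prop :=
  ∀ (a b c : α) (r s : List β), h a ++ h b = r ++ h c ++ s →
    (r = [] ∧ a = c) ∨ (s = [] ∧ b = c)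

section

variable {α β : Type*} {h : α → List β} {q : ℕ}

@[simp]
lemma applyMorphism_nil : applyMorphism h [] = [] := rfl

@[simp]
lemma applyMorphism_cons (a : α) (l : List α) :
    applyMorphism h (a :: l) = h a ++ applyMorphism h l := by
  simp [applyMorphism]

@[simp]
lemma applyMorphism_append (u v : List α) :
    applyMorphism h (u ++ v) = applyMorphism h u ++ applyMorphism h v := by
  simp [applyMorphism]

lemma applyMorphism_flatten_replicate (n : ℕ) (u : List α) :
    applyMorphism h (List.replicate n u).flatten
      = (List.replicate n (applyMorphism h u)).flatten := by
  induction n with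
  | zero => rfl
  | succ n ih => simp [List.replicate_succ, ih]

lemma Synchronizing.injective (hsync : Synchronizing h) : Function.Injective h := by
  intro a c he
  rcases hsync a a c [] (h a) (by simp [he]) with ⟨-, hac⟩ | ⟨-, hac⟩ <;> exact hac

lemma Synchronizing.dvd_length_of_applyMorphism_eq (hsync : Synchronizing h)
    (huni : ∀ a, (h a).length = q) {c : α} :
    ∀ {w : List α} {x y : List β}, applyMorphism h w = x ++ h c ++ y → q ∣ x.length
  | [], x, y, hw => by simp_all
  | a :: w, x, y, hw => by
    have hlen := congrArg List.length hw
    simp only [applyMorphism_cons, List.length_append, huni] at hw hlen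
    by_cases hqx : q ≤ x.length
    · obtain ⟨x', rfl⟩ : h a <+: x :=
        List.prefix_of_prefix_length_le ⟨_, rfl⟩ ⟨h c ++ y, by rw [hw, List.append_assoc]⟩
          (by rwa [huni])
      simp only [List.append_assoc, List.append_cancel_left_eq] at hw
      simpa [huni] using (Nat.dvd_add_right (dvd_refl q)).mpr
        (hsync.dvd_length_of_applyMorphism_eq huni (by simpa using hw))
    · suffices x = [] by simp [this]
      obtain _ | ⟨b, w⟩ := w
      · simp only [applyMorphism_nil, List.length_nil] at hlen
        exact List.eq_nil_of_length_eq_zero (by omega)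
      obtain ⟨s, hs⟩ : x ++ h c <+: h a ++ h b :=
        List.prefix_of_prefix_length_le ⟨y, hw.symm⟩ ⟨applyMorphism h w, by simp⟩
          (by simp only [List.length_append, huni]; omega)
      rcases hsync a b c x s hs.symm with ⟨hx, -⟩ | ⟨rfl, -⟩
      · exact hx
      · have := congrArg List.length hs
        simp only [List.length_append, huni, List.length_nil] at this
        omega

lemma exists_applyMorphism_eq_of_prefix (huni : ∀ a, (h a).length = q) :
    ∀ {w : List α} {x : List β}, x <+: applyMorphism h w → q ∣ x.length →
      ∃ u, applyMorphism h u = x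
  | [], x, hx, _ => ⟨[], by simp_all⟩
  | a :: w, x, hx, hdvd => by
    rcases eq_or_ne x [] with rfl | hne
    · exact ⟨[], rfl⟩
    obtain ⟨x', rfl⟩ : h a <+: x :=
      List.prefix_of_prefix_length_le (by simp) hx
        (huni a ▸ Nat.le_of_dvd (List.length_pos_iff.mpr hne) hdvd)
    rw [applyMorphism_cons, List.prefix_append_right_inj] at hx
    obtain ⟨u, hu⟩ := exists_applyMorphism_eq_of_prefix huni hx
      (by simpa [huni] using hdvd)
    exact ⟨a :: u, by simp [hu]⟩

lemma prefix_of_applyMorphism_prefix (hinj : Function.Injective h) (hq : 0 < q)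
    (huni : ∀ a, (h a).length = q) :
    ∀ {u v : List α}, applyMorphism h u <+: applyMorphism h v → u <+: v
  | [], _, _ => List.nil_prefix
  | a :: u, [], huv => by
    have := huv.length_le
    simp only [applyMorphism_cons, applyMorphism_nil, List.length_append, huni,
      List.length_nil] at this
    omega
  | a :: u, b :: v, huv => by
    rw [applyMorphism_cons, applyMorphism_cons,
      List.prefix_append_inj_of_length_eq (by rw [huni, huni])] at huv
    rw [hinj huv.1]
    exact List.cons_prefix_cons.mpr ⟨rfl, prefix_of_applyMorphism_prefix hinj hq huni huv.2⟩

end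

theorem synchronizing_pullback_power {α β : Type*} (h : α → List β) (q : ℕ) (hq : 0 < q)
    (huni : ∀ a : α, (h a).length = q) (hsync : Synchronizing h)
    (n : ℕ) (hn : 1 < n) (w : List α) (z : List β) (hz : q ≤ z.length)
    (hpref : (List.replicate n z).flatten <+: applyMorphism h w) :
    q ∣ z.length ∧ ∃ u : List α, (List.replicate n u).flatten <+: w := by
  obtain ⟨m, rfl⟩ : ∃ m, n = m + 2 := ⟨n - 2, by omega⟩
  obtain ⟨y, hy⟩ : z ++ z <+: applyMorphism h w :=
    List.IsPrefix.trans ⟨(List.replicate m z).flatten, by simp [List.replicate_succ]⟩ hpref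
  have hz_prefix : z <+: applyMorphism h w := (List.prefix_append z z).trans ⟨y, hy⟩
  obtain ⟨a, w', rfl⟩ : ∃ a w', w = a :: w' := by
    rcases w with _ | ⟨a, w'⟩
    · simp only [applyMorphism_nil, List.prefix_nil] at hz_prefix
      simp only [hz_prefix, List.length_nil, Nat.le_zero] at hz
      omega
    · exact ⟨a, w', rfl⟩
  -- the first letter image also occurs right after the first copy of `z`
  obtain ⟨s, hs⟩ : h a <+: z :=
    List.prefix_of_prefix_length_le (by simp) hz_prefix (by rwa [huni])
  have hdvd : q ∣ z.length :=
    hsync.dvd_length_of_applyMorphism_eq huni (c := a) (y := s ++ y) (by rw [← hy, ← hs]; simp)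
  obtain ⟨u, hu⟩ := exists_applyMorphism_eq_of_prefix huni hz_prefix hdvd
  rw [← hu, ← applyMorphism_flatten_replicate] at hpref
  exact ⟨hdvd, u, prefix_of_applyMorphism_prefix hsync.injective hq huni hpref⟩
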